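/- Suppose S : ℝⁿ → ℝ is twice continuously differentiable and ψ ∈ ℝ is a constant such that the gradient-homothetic equation ∂_i ∂_j S(x) − Σ_l Γ^l_{ij}(x) ∂_l S(x) = ψ g_{ij}(x) holds for all x and all i, j. Then along every geodesic of g the quantity ½ ψ s² Σ_{i,j} g_{ij}(x(s)) ẋ^i(s) ẋ^j(s) − s Σ_i ∂_i S(x(s)) ẋ^i(s) + S(x(s)) is constant in s; a gradient homothetic Killing vector gives the Noether first integral φ = ½ t² ψ g_{ij} ẋ^i ẋ^j − t S_{,i} ẋ^i + S of the geodesic Lagrangian. -/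

import Mathlib

/-- The Christoffel symbols `Γ^i_{jk}(x) = ½ Σ_l (g(x)⁻¹)_{il}
(∂_j g_{lk}(x) + ∂_k g_{lj}(x) − ∂_l g_{jk}(x))` of a metric `g` on `ℝⁿ`,
given in coordinates; `∂_j` is the directional derivative along `Pi.single j 1`. -/
noncomputable def christoffel {n : ℕ} (g : (Fin n → ℝ) → Matrix (Fin n) (Fin n) ℝ)
    (i j k : Fin n) (x : Fin n → ℝ) : ℝ :=
  (1 / 2) * ∑ l, (g x)⁻¹ i l *
    (fderiv ℝ (fun y => g y l k) x (Pi.single j 1)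
      + fderiv ℝ (fun y => g y l j) x (Pi.single k 1)
      - fderiv ℝ (fun y => g y j k) x (Pi.single l 1))

/-- A geodesic of `g`: a twice continuously differentiable curve `γ : ℝ → ℝⁿ` with
`ẍ^i = −Σ_{j,k} Γ^i_{jk}(x) ẋ^j ẋ^k`. -/
def IsGeodesic {n : ℕ} (g : (Fin n → ℝ) → Matrix (Fin n) (Fin n) ℝ)
    (γ : ℝ → Fin n → ℝ) : Prop :=
  (∀ i, ContDiff ℝ 2 (fun s => γ s i)) ∧
  ∀ s i, deriv (deriv (fun t => γ t i)) s =
    - ∑ j, ∑ k, christoffel g i j k (γ s) *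
      deriv (fun t => γ t j) s * deriv (fun t => γ t k) s

/-!
Write `E = g_{ij} ẋ^i ẋ^j` and `P = ∂_i S ẋ^i` along a geodesic `x`. Lowering the index of the
geodesic equation with `g` turns `ẍ` into `-½ (∂_j g_{ik} + ∂_k g_{ij} - ∂_i g_{jk}) ẋ^j ẋ^k`, which
makes `E' = 0`. The same equation turns `P'` into `(∂_i ∂_j S - Γ^l_{ij} ∂_l S) ẋ^i ẋ^j = ψ E`, and
`(S ∘ x)' = P`. Hence `φ' = ψ s E - P - s ψ E + P = 0`.
-/

open Finset Matrix

theorem ContinuousLinearMap.apply_eq_sum_apply_single_mul {ι : Type*} [Fintype ι]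
    [DecidableEq ι] (L : (ι → ℝ) →L[ℝ] ℝ) (w : ι → ℝ) :
    L w = ∑ i, L (Pi.single i 1) * w i := by
  conv_lhs => rw [pi_eq_sum_univ' w]
  simp [mul_comm]

theorem DifferentiableAt.hasDerivAt_comp_eq_sum {ι : Type*} [Fintype ι] [DecidableEq ι]
    {f : (ι → ℝ) → ℝ} {γ : ℝ → ι → ℝ} {v : ι → ℝ} {s : ℝ} (hf : DifferentiableAt ℝ f (γ s))
    (hγ : HasDerivAt γ v s) :
    HasDerivAt (fun t => f (γ t)) (∑ k, fderiv ℝ f (γ s) (Pi.single k 1) * v k) s := by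
  have h := hf.hasFDerivAt.comp_hasDerivAt s hγ
  rwa [ContinuousLinearMap.apply_eq_sum_apply_single_mul] at h

theorem hasDerivAt_noether_combination {E P Q : ℝ → ℝ} {ψ s : ℝ} (hE : HasDerivAt E 0 s)
    (hP : HasDerivAt P (ψ * E s) s) (hQ : HasDerivAt Q (P s) s) :
    HasDerivAt (fun t => 1 / 2 * ψ * t ^ 2 * E t - t * P t + Q t) 0 s := by
  refine ((((hasDerivAt_pow 2 s).const_mul (1 / 2 * ψ)).fun_mul hE).fun_sub
    ((hasDerivAt_id' s).fun_mul hP)).fun_add hQ |>.congr_deriv ?_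
  simp only [Nat.cast_ofNat, Nat.add_one_sub_one, pow_one]
  ring

section

variable {n : ℕ}

section PointwiseIdentities

variable {g : (Fin n → ℝ) → Matrix (Fin n) (Fin n) ℝ} {p v : Fin n → ℝ}

theorem sum_metric_mul_christoffel (hp : IsUnit (g p).det) (m j k : Fin n) :
    ∑ i, g p m i * christoffel g i j k p =
      1 / 2 * (fderiv ℝ (fun y => g y m k) p (Pi.single j 1)
        + fderiv ℝ (fun y => g y m j) p (Pi.single k 1)
        - fderiv ℝ (fun y => g y j k) p (Pi.single m 1)) := by
  set X : Fin n → ℝ := fun l => fderiv ℝ (fun y => g y l k) p (Pi.single j 1)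
    + fderiv ℝ (fun y => g y l j) p (Pi.single k 1)
    - fderiv ℝ (fun y => g y j k) p (Pi.single l 1)
  have h : ∑ i, g p m i * christoffel g i j k p = 1 / 2 * (g p *ᵥ ((g p)⁻¹ *ᵥ X)) m := by
    simp only [christoffel, mulVec, dotProduct, mul_sum, X]
    exact sum_congr rfl fun _ _ => sum_congr rfl fun _ _ => by ring
  rw [h, mulVec_mulVec, mul_nonsing_inv _ hp, one_mulVec]

theorem energy_deriv_eq_zero (hsymm : ∀ i j, g p i j = g p j i) (hp : IsUnit (g p).det)
    {a : Fin n → ℝ} (ha : ∀ i, a i = -∑ j, ∑ k, christoffel g i j k p * v j * v k) :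
    ∑ i, ∑ j, (((∑ k, fderiv ℝ (fun y => g y i j) p (Pi.single k 1) * v k) * v i
      + g p i j * a i) * v j + g p i j * v i * a j) = 0 := by
  set D := ∑ i, ∑ j, ∑ k, fderiv ℝ (fun y => g y i j) p (Pi.single k 1) * v i * v j * v k
  have hexpand : ∑ i, ∑ j, (((∑ k, fderiv ℝ (fun y => g y i j) p (Pi.single k 1) * v k) * v i
      + g p i j * a i) * v j + g p i j * v i * a j)
      = D + ∑ i, ∑ j, g p i j * a i * v j + ∑ i, ∑ j, g p i j * v i * a j := by
    simp only [D, add_mul, sum_add_distrib, sum_mul]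
    congr 2
    exact sum_congr rfl fun _ _ => sum_congr rfl fun _ _ => sum_congr rfl fun _ _ => by ring
  have hswap : ∑ i, ∑ j, g p i j * v i * a j = ∑ i, ∑ j, g p i j * a i * v j := by
    rw [sum_comm]
    exact sum_congr rfl fun i _ => sum_congr rfl fun j _ => by rw [hsymm]; ring
  have hlower : ∑ i, ∑ j, g p i j * a i * v j = -(1 / 2) * D := by
    calc ∑ i, ∑ j, g p i j * a i * v j
        = -∑ j, ∑ k, ∑ l, (∑ i, g p j i * christoffel g i k l p) * v j * v k * v l := by
          simp only [ha, mul_neg, neg_mul, sum_neg_distrib, mul_sum, sum_mul, neg_inj]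
          rw [sum_comm]
          refine sum_congr rfl fun j _ => ?_
          rw [sum_comm]
          refine sum_congr rfl fun k _ => ?_
          rw [sum_comm]
          exact sum_congr rfl fun l _ => sum_congr rfl fun i _ => by rw [hsymm]; ring
      _ = -(1 / 2) * ∑ j, ∑ k, ∑ l,
            (fderiv ℝ (fun y => g y j l) p (Pi.single k 1)
              + fderiv ℝ (fun y => g y j k) p (Pi.single l 1)
              - fderiv ℝ (fun y => g y k l) p (Pi.single j 1)) * v j * v k * v l := by
          simp only [sum_metric_mul_christoffel hp, mul_sum, ← sum_neg_distrib]
          exact sum_congr rfl fun _ _ => sum_congr rfl fun _ _ => sum_congr rfl fun _ _ => by ring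
      _ = -(1 / 2) * D := by
          have hcancel : ∑ j, ∑ k, ∑ l,
                fderiv ℝ (fun y => g y j l) p (Pi.single k 1) * v j * v k * v l
              = ∑ j, ∑ k, ∑ l,
                fderiv ℝ (fun y => g y k l) p (Pi.single j 1) * v j * v k * v l := by
            rw [sum_comm]
            exact sum_congr rfl fun _ _ => sum_congr rfl fun _ _ => sum_congr rfl fun _ _ => by ring
          have hD : ∑ j, ∑ k, ∑ l,
                fderiv ℝ (fun y => g y j k) p (Pi.single l 1) * v j * v k * v l = D := rfl
          simp only [sub_mul, add_mul, sum_add_distrib, sum_sub_distrib, hcancel, hD]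
          ring
  linarith

theorem gradient_pairing_deriv_eq {S : (Fin n → ℝ) → ℝ} {ψ : ℝ}
    (hHess : ∀ i j, fderiv ℝ (fun y => fderiv ℝ S y (Pi.single j 1)) p (Pi.single i 1)
      - ∑ l, christoffel g l i j p * fderiv ℝ S p (Pi.single l 1) = ψ * g p i j)
    {a : Fin n → ℝ} (ha : ∀ i, a i = -∑ j, ∑ k, christoffel g i j k p * v j * v k) :
    ∑ i, ((∑ j, fderiv ℝ (fun y => fderiv ℝ S y (Pi.single i 1)) p (Pi.single j 1) * v j) * v i
      + fderiv ℝ S p (Pi.single i 1) * a i) = ψ * ∑ i, ∑ j, g p i j * v i * v j := by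
  have hhess :
      ∑ i, (∑ j, fderiv ℝ (fun y => fderiv ℝ S y (Pi.single i 1)) p (Pi.single j 1) * v j) * v i
        = ∑ i, ∑ j, (ψ * g p i j + ∑ l, christoffel g l i j p * fderiv ℝ S p (Pi.single l 1))
            * v i * v j := by
    simp only [sum_mul]
    rw [sum_comm]
    exact sum_congr rfl fun i _ => sum_congr rfl fun j _ => by
      linear_combination v i * v j * hHess i j
  have haccel : ∑ i, fderiv ℝ S p (Pi.single i 1) * a i
      = -∑ i, ∑ j, (∑ l, christoffel g l i j p * fderiv ℝ S p (Pi.single l 1)) * v i * v j := by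
    simp only [ha, mul_neg, mul_sum, sum_mul, sum_neg_distrib, neg_inj]
    rw [sum_comm_cycle, sum_comm_cycle]
    exact sum_congr rfl fun _ _ => sum_congr rfl fun _ _ => sum_congr rfl fun _ _ => by ring
  rw [sum_add_distrib, hhess, haccel, ← sub_eq_add_neg, ← sum_sub_distrib, mul_sum]
  refine sum_congr rfl fun _ _ => ?_
  rw [← sum_sub_distrib, mul_sum]
  exact sum_congr rfl fun _ _ => by ring

end PointwiseIdentities

namespace IsGeodesic

variable {g : (Fin n → ℝ) → Matrix (Fin n) (Fin n) ℝ} {γ : ℝ → Fin n → ℝ}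

theorem hasDerivAt_coord (hγ : IsGeodesic g γ) (i : Fin n) (s : ℝ) :
    HasDerivAt (fun t => γ t i) (deriv (fun t => γ t i) s) s :=
  ((hγ.1 i).differentiable (by norm_num) s).hasDerivAt

theorem hasDerivAt_deriv_coord (hγ : IsGeodesic g γ) (i : Fin n) (s : ℝ) :
    HasDerivAt (deriv fun t => γ t i) (deriv (deriv fun t => γ t i) s) s := by
  have h : ContDiff ℝ (1 + 1) (fun t => γ t i) := hγ.1 i
  exact ((contDiff_succ_iff_deriv.mp h).2.2.differentiable (by norm_num) s).hasDerivAt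

theorem hasDerivAt (hγ : IsGeodesic g γ) (s : ℝ) :
    HasDerivAt γ (fun i => deriv (fun t => γ t i) s) s :=
  hasDerivAt_pi.mpr fun i => hγ.hasDerivAt_coord i s

theorem hasDerivAt_energy (hγ : IsGeodesic g γ) (hsymm : ∀ x i j, g x i j = g x j i)
    (hinv : ∀ x, IsUnit (g x).det) (hdiff : ∀ i j, Differentiable ℝ fun x => g x i j) (s : ℝ) :
    HasDerivAt (fun t => ∑ i, ∑ j,
      g (γ t) i j * deriv (fun u => γ u i) t * deriv (fun u => γ u j) t) 0 s := by
  refine (HasDerivAt.fun_sum fun i _ => HasDerivAt.fun_sum fun j _ =>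
    ((((hdiff i j) (γ s)).hasDerivAt_comp_eq_sum (hγ.hasDerivAt s)).fun_mul
      (hγ.hasDerivAt_deriv_coord i s)).fun_mul (hγ.hasDerivAt_deriv_coord j s)).congr_deriv ?_
  exact energy_deriv_eq_zero (hsymm _) (hinv _) (hγ.2 s)

theorem hasDerivAt_gradient_pairing (hγ : IsGeodesic g γ) {S : (Fin n → ℝ) → ℝ} {ψ : ℝ}
    (hS : ∀ i, Differentiable ℝ fun y => fderiv ℝ S y (Pi.single i 1))
    (hHess : ∀ x i j, fderiv ℝ (fun y => fderiv ℝ S y (Pi.single j 1)) x (Pi.single i 1)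
      - ∑ l, christoffel g l i j x * fderiv ℝ S x (Pi.single l 1) = ψ * g x i j) (s : ℝ) :
    HasDerivAt (fun t => ∑ i, fderiv ℝ S (γ t) (Pi.single i 1) * deriv (fun u => γ u i) t)
      (ψ * ∑ i, ∑ j, g (γ s) i j * deriv (fun u => γ u i) s * deriv (fun u => γ u j) s) s := by
  refine (HasDerivAt.fun_sum fun i _ => (((hS i) (γ s)).hasDerivAt_comp_eq_sum
    (hγ.hasDerivAt s)).fun_mul (hγ.hasDerivAt_deriv_coord i s)).congr_deriv ?_
  exact gradient_pairing_deriv_eq (hHess _) (hγ.2 s)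

end IsGeodesic

end

theorem gradient_homothetic_noether_first_integral_general {n : ℕ}
    (g : (Fin n → ℝ) → Matrix (Fin n) (Fin n) ℝ)
    (hg_symm : ∀ x i j, g x i j = g x j i)
    (hg_inv : ∀ x, IsUnit (g x).det)
    (hg_C1 : ∀ i j, ContDiff ℝ 1 fun x => g x i j)
    (S : (Fin n → ℝ) → ℝ) (ψ : ℝ) (hS : ContDiff ℝ 2 S)
    (hgradHV : ∀ x i j,
      fderiv ℝ (fun y => fderiv ℝ S y (Pi.single j 1)) x (Pi.single i 1)
        - ∑ l, christoffel g l i j x * fderiv ℝ S x (Pi.single l 1)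
        = ψ * g x i j)
    (γ : ℝ → Fin n → ℝ) (hγ : IsGeodesic g γ) (s₁ s₂ : ℝ) :
    (1 / 2) * ψ * s₁ ^ 2 *
        (∑ i, ∑ j, g (γ s₁) i j * deriv (fun t => γ t i) s₁ * deriv (fun t => γ t j) s₁)
        - s₁ * (∑ i, fderiv ℝ S (γ s₁) (Pi.single i 1) * deriv (fun t => γ t i) s₁)
        + S (γ s₁)
      = (1 / 2) * ψ * s₂ ^ 2 *
        (∑ i, ∑ j, g (γ s₂) i j * deriv (fun t => γ t i) s₂ * deriv (fun t => γ t j) s₂)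
        - s₂ * (∑ i, fderiv ℝ S (γ s₂) (Pi.single i 1) * deriv (fun t => γ t i) s₂)
        + S (γ s₂) := by
  have hg_diff : ∀ i j, Differentiable ℝ fun x => g x i j := fun i j =>
    (hg_C1 i j).differentiable (by norm_num)
  have hS_partial : ∀ i : Fin n, Differentiable ℝ fun y => fderiv ℝ S y (Pi.single i 1) :=
    fun i => ((hS.fderiv_right (m := 1) (by norm_num)).clm_apply contDiff_const).differentiable
      (by norm_num)
  have hconst : ∀ s, HasDerivAt (fun t => (1 / 2) * ψ * t ^ 2 *
        (∑ i, ∑ j, g (γ t) i j * deriv (fun u => γ u i) t * deriv (fun u => γ u j) t)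
        - t * (∑ i, fderiv ℝ S (γ t) (Pi.single i 1) * deriv (fun u => γ u i) t)
        + S (γ t)) 0 s := fun s =>
    hasDerivAt_noether_combination (hγ.hasDerivAt_energy hg_symm hg_inv hg_diff s)
      (hγ.hasDerivAt_gradient_pairing hS_partial hgradHV s)
      ((hS.differentiable (by norm_num) _).hasDerivAt_comp_eq_sum (hγ.hasDerivAt s))
  exact is_const_of_deriv_eq_zero (fun t => (hconst t).differentiableAt)
    (fun t => (hconst t).deriv) s₁ s₂

/-- A gradient homothetic Killing vector generated by `S` with constant
factor `ψ`, i.e. `∂_i ∂_j S − Σ_l Γ^l_{ij} ∂_l S = ψ g_{ij}`, gives the Noether first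
integral `½ ψ s² Σ_{i,j} g_{ij} ẋ^i ẋ^j − s Σ_i ∂_i S ẋ^i + S` of the geodesic Lagrangian. -/
theorem gradient_homothetic_noether_first_integral {n : ℕ} (hn : 1 ≤ n)
    (g : (Fin n → ℝ) → Matrix (Fin n) (Fin n) ℝ)
    (hg_symm : ∀ x i j, g x i j = g x j i)
    (hg_inv : ∀ x, IsUnit (g x).det)
    (hg_C1 : ∀ i j, ContDiff ℝ 1 fun x => g x i j)
    (S : (Fin n → ℝ) → ℝ) (ψ : ℝ) (hS : ContDiff ℝ 2 S)
    (hgradHV : ∀ x i j,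
      fderiv ℝ (fun y => fderiv ℝ S y (Pi.single j 1)) x (Pi.single i 1)
        - ∑ l, christoffel g l i j x * fderiv ℝ S x (Pi.single l 1)
        = ψ * g x i j)
    (γ : ℝ → Fin n → ℝ) (hγ : IsGeodesic g γ) (s₁ s₂ : ℝ) :
    (1 / 2) * ψ * s₁ ^ 2 *
        (∑ i, ∑ j, g (γ s₁) i j * deriv (fun t => γ t i) s₁ * deriv (fun t => γ t j) s₁)
        - s₁ * (∑ i, fderiv ℝ S (γ s₁) (Pi.single i 1) * deriv (fun t => γ t i) s₁)
        + S (γ s₁)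
      = (1 / 2) * ψ * s₂ ^ 2 *
        (∑ i, ∑ j, g (γ s₂) i j * deriv (fun t => γ t i) s₂ * deriv (fun t => γ t j) s₂)
        - s₂ * (∑ i, fderiv ℝ S (γ s₂) (Pi.single i 1) * deriv (fun t => γ t i) s₂)
        + S (γ s₂) :=
  gradient_homothetic_noether_first_integral_general g hg_symm hg_inv hg_C1 S ψ hS hgradHV γ hγ s₁
    s₂
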